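/- arXiv:2405.04465 — 3 statements merged into one kernel-verified Lean document; each statement's English description precedes it below -/
import Mathlib

section
/- Let d̲ := inf Supp(D₂) > 0 with E[D₂ − d̲] > 0. Assume (i) lim_{d ↓ d̲} E[ΔY(0) | D₂ ≤ d] = E[ΔY(0)], (ii) lim_{d ↓ d̲} E[(D₂ − d̲)·TE₂ | D₂ ≤ d] = 0, and (iii) lim_{d ↓ d̲} E[TE₂ | D₂ ≤ d] / WAS < E[D₂]/d̲ (with the convention 0/0 = 0, and requiring lim_{d ↓ d̲} E[TE₂ | D₂ ≤ d] ≤ 0 if WAS = 0). Then WAS ≥ 0 if and only if (E[ΔY] − lim_{d ↓ d̲} E[ΔY | D₂ ≤ d]) / E[D₂ − d̲] ≥ 0. -/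
open MeasureTheory Filter Set Topology

/-!
Almost surely `ΔY = ΔY(0) + (D₂ - d̲) · TE₂ + d̲ · TE₂`. Averaging over `{D₂ ≤ d}` and letting
`d ↓ d̲`, parallel trends (i) and condition (ii) identify the limit of `E[ΔY | D₂ ≤ d]` as
`E[ΔY(0)] + d̲ · lim E[TE₂ | D₂ ≤ d]`. Hence the numerator of the estimand is
`E[D₂] · WAS - d̲ · lim E[TE₂ | D₂ ≤ d]`, and condition (iii) says exactly that the second
term cannot flip the sign of the first.
-/

section SetIntegralDiv

variable {Ω ι : Type*} [MeasurableSpace Ω] {μ : Measure Ω} {l : Filter ι} {s : ι → Set Ω}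
  {m : ι → ℝ} {a b : ℝ}

theorem tendsto_setIntegral_div_add {f g h : Ω → ℝ} (hf : f =ᵐ[μ] g + h)
    (hg : Integrable g μ) (hh : Integrable h μ)
    (hga : Tendsto (fun i => (∫ ω in s i, g ω ∂μ) / m i) l (𝓝 a))
    (hhb : Tendsto (fun i => (∫ ω in s i, h ω ∂μ) / m i) l (𝓝 b)) :
    Tendsto (fun i => (∫ ω in s i, f ω ∂μ) / m i) l (𝓝 (a + b)) := by
  refine (hga.add hhb).congr fun i => ?_
  rw [integral_congr_ae (ae_restrict_of_ae hf), ← add_div]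
  exact congrArg (· / m i) (integral_add hg.restrict hh.restrict).symm

theorem tendsto_setIntegral_const_mul_div {f : Ω → ℝ} (c : ℝ)
    (hfa : Tendsto (fun i => (∫ ω in s i, f ω ∂μ) / m i) l (𝓝 a)) :
    Tendsto (fun i => (∫ ω in s i, c * f ω ∂μ) / m i) l (𝓝 (c * a)) := by
  simpa only [integral_const_mul, mul_div_assoc] using hfa.const_mul c

end SetIntegralDiv

theorem nonneg_iff_nonneg_mul_sub_of_div_lt {w t a b : ℝ} (hb : 0 < b)
    (h₁ : w ≠ 0 → t / w < a / b) (h₂ : w = 0 → t ≤ 0) :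
    0 ≤ w ↔ 0 ≤ a * w - b * t := by
  rcases lt_trichotomy w 0 with hw | rfl | hw
  · have hlt : a / b * w < t := (div_lt_iff_of_neg hw).mp (h₁ hw.ne)
    have : a * w < b * t := by
      rw [div_mul_eq_mul_div, div_lt_iff₀ hb] at hlt
      linarith
    constructor <;> intro <;> linarith
  · simp only [le_refl, mul_zero, zero_sub, neg_nonneg, true_iff]
    exact mul_nonpos_of_nonneg_of_nonpos hb.le (h₂ rfl)
  · have : t * b < a * w := (div_lt_div_iff₀ hw hb).mp (h₁ hw.ne')
    constructor <;> intro <;> linarith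

theorem sign_of_WAS_identification_general {Ω : Type*} [MeasurableSpace Ω]
    (μ : Measure Ω) [IsProbabilityMeasure μ]
    (D : Ω → ℝ) (Y1 : Ω → ℝ) (Y2 : ℝ → Ω → ℝ) (dlow L Lte : ℝ)
    (hdlow : 0 < dlow)
    (hDlb : ∀ᵐ ω ∂μ, dlow ≤ D ω)
    (hED : 0 < ∫ ω, D ω ∂μ)
    (hEDd : 0 < ∫ ω, (D ω - dlow) ∂μ)
    (hY1 : Integrable Y1 μ)
    (hY20 : Integrable (fun ω => Y2 0 ω) μ)
    (hY2D : Integrable (fun ω => Y2 (D ω) ω) μ)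
    (hTEint : Integrable (fun ω => (Y2 (D ω) ω - Y2 0 ω) / D ω) μ)
    -- (i) parallel trends between the least treated and the full population
    (hPT : Tendsto (fun d : ℝ =>
        (∫ ω in {ω | D ω ≤ d}, (Y2 0 ω - Y1 ω) ∂μ) / (μ {ω | D ω ≤ d}).toReal)
      (nhdsWithin dlow (Ioi dlow)) (nhds (∫ ω, (Y2 0 ω - Y1 ω) ∂μ)))
    -- (ii) lim_{d ↓ d̲} E[(D₂ − d̲)·TE₂ | D₂ ≤ d] = 0
    (hUC : Tendsto (fun d : ℝ =>
        (∫ ω in {ω | D ω ≤ d}, ((D ω - dlow) * ((Y2 (D ω) ω - Y2 0 ω) / D ω)) ∂μ)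
          / (μ {ω | D ω ≤ d}).toReal)
      (nhdsWithin dlow (Ioi dlow)) (nhds 0))
    -- the limit lim_{d ↓ d̲} E[ΔY | D₂ ≤ d] exists and equals L
    (hL : Tendsto (fun d : ℝ =>
        (∫ ω in {ω | D ω ≤ d}, (Y2 (D ω) ω - Y1 ω) ∂μ) / (μ {ω | D ω ≤ d}).toReal)
      (nhdsWithin dlow (Ioi dlow)) (nhds L))
    -- the limit lim_{d ↓ d̲} E[TE₂ | D₂ ≤ d] exists and equals Lte
    (hLte : Tendsto (fun d : ℝ =>
        (∫ ω in {ω | D ω ≤ d}, ((Y2 (D ω) ω - Y2 0 ω) / D ω) ∂μ)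
          / (μ {ω | D ω ≤ d}).toReal)
      (nhdsWithin dlow (Ioi dlow)) (nhds Lte))
    -- (iii) Assumption 5 of the paper, with the convention 0/0 = 0:
    (hsign₁ : (∫ ω, (Y2 (D ω) ω - Y2 0 ω) ∂μ) / (∫ ω, D ω ∂μ) ≠ 0 →
      Lte / ((∫ ω, (Y2 (D ω) ω - Y2 0 ω) ∂μ) / (∫ ω, D ω ∂μ))
        < (∫ ω, D ω ∂μ) / dlow)
    (hsign₂ : (∫ ω, (Y2 (D ω) ω - Y2 0 ω) ∂μ) / (∫ ω, D ω ∂μ) = 0 → Lte ≤ 0) :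
    0 ≤ (∫ ω, (Y2 (D ω) ω - Y2 0 ω) ∂μ) / (∫ ω, D ω ∂μ)
      ↔ 0 ≤ ((∫ ω, (Y2 (D ω) ω - Y1 ω) ∂μ) - L) / ∫ ω, (D ω - dlow) ∂μ := by
  set TE : Ω → ℝ := fun ω => (Y2 (D ω) ω - Y2 0 ω) / D ω
  have hD : ∀ᵐ ω ∂μ, D ω ≠ 0 := hDlb.mono fun ω hω => (hdlow.trans_le hω).ne'
  have hUCint : Integrable (fun ω => (D ω - dlow) * TE ω) μ := by
    refine ((hY2D.sub hY20).sub (hTEint.const_mul dlow)).congr (hD.mono fun ω hω => ?_)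
    simp only [TE, Pi.sub_apply]
    field_simp
  have hsplit : (fun ω => Y2 (D ω) ω - Y1 ω) =ᵐ[μ] (fun ω => Y2 0 ω - Y1 ω)
      + ((fun ω => (D ω - dlow) * TE ω) + fun ω => dlow * TE ω) := by
    filter_upwards [hD] with ω hω
    simp only [TE, Pi.add_apply]
    field_simp
    ring
  have hL' := tendsto_setIntegral_div_add hsplit (hY20.sub hY1)
    (hUCint.add (hTEint.const_mul dlow)) hPT
    (tendsto_setIntegral_div_add EventuallyEq.rfl hUCint (hTEint.const_mul dlow) hUC
      (tendsto_setIntegral_const_mul_div dlow hLte))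
  have hnum : (∫ ω, (Y2 (D ω) ω - Y1 ω) ∂μ) - L = (∫ ω, D ω ∂μ)
      * ((∫ ω, (Y2 (D ω) ω - Y2 0 ω) ∂μ) / ∫ ω, D ω ∂μ) - dlow * Lte := by
    rw [tendsto_nhds_unique hL hL', mul_div_cancel₀ _ hED.ne', integral_sub hY2D hY1,
      integral_sub hY20 hY1, integral_sub hY2D hY20]
    ring
  rw [le_div_iff₀ hEDd, zero_mul, hnum]
  exact nonneg_iff_nonneg_mul_sub_of_div_lt hdlow hsign₁ hsign₂

/-- Theorem 2 of the paper: identification of the sign of WAS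
in designs without a quasi-untreated group. -/
theorem sign_of_WAS_identification {Ω : Type*} [MeasurableSpace Ω]
    (μ : Measure Ω) [IsProbabilityMeasure μ]
    (D : Ω → ℝ) (Y1 : Ω → ℝ) (Y2 : ℝ → Ω → ℝ) (dlow L Lte : ℝ)
    (hdlow : 0 < dlow)
    (hDlb : ∀ᵐ ω ∂μ, dlow ≤ D ω)
    (hQ : ∀ d : ℝ, dlow < d → 0 < μ {ω | D ω ≤ d})
    (hDint : Integrable D μ) (hED : 0 < ∫ ω, D ω ∂μ)
    (hEDd : 0 < ∫ ω, (D ω - dlow) ∂μ)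
    (hY1 : Integrable Y1 μ)
    (hY20 : Integrable (fun ω => Y2 0 ω) μ)
    (hY2D : Integrable (fun ω => Y2 (D ω) ω) μ)
    (hTEint : Integrable (fun ω => (Y2 (D ω) ω - Y2 0 ω) / D ω) μ)
    -- (i) parallel trends between the least treated and the full population
    (hPT : Tendsto (fun d : ℝ =>
        (∫ ω in {ω | D ω ≤ d}, (Y2 0 ω - Y1 ω) ∂μ) / (μ {ω | D ω ≤ d}).toReal)
      (nhdsWithin dlow (Ioi dlow)) (nhds (∫ ω, (Y2 0 ω - Y1 ω) ∂μ)))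
    -- (ii) lim_{d ↓ d̲} E[(D₂ − d̲)·TE₂ | D₂ ≤ d] = 0
    (hUC : Tendsto (fun d : ℝ =>
        (∫ ω in {ω | D ω ≤ d}, ((D ω - dlow) * ((Y2 (D ω) ω - Y2 0 ω) / D ω)) ∂μ)
          / (μ {ω | D ω ≤ d}).toReal)
      (nhdsWithin dlow (Ioi dlow)) (nhds 0))
    -- the limit lim_{d ↓ d̲} E[ΔY | D₂ ≤ d] exists and equals L
    (hL : Tendsto (fun d : ℝ =>
        (∫ ω in {ω | D ω ≤ d}, (Y2 (D ω) ω - Y1 ω) ∂μ) / (μ {ω | D ω ≤ d}).toReal)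
      (nhdsWithin dlow (Ioi dlow)) (nhds L))
    -- the limit lim_{d ↓ d̲} E[TE₂ | D₂ ≤ d] exists and equals Lte
    (hLte : Tendsto (fun d : ℝ =>
        (∫ ω in {ω | D ω ≤ d}, ((Y2 (D ω) ω - Y2 0 ω) / D ω) ∂μ)
          / (μ {ω | D ω ≤ d}).toReal)
      (nhdsWithin dlow (Ioi dlow)) (nhds Lte))
    -- (iii) Assumption 5 of the paper, with the convention 0/0 = 0:
    (hsign₁ : (∫ ω, (Y2 (D ω) ω - Y2 0 ω) ∂μ) / (∫ ω, D ω ∂μ) ≠ 0 →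
      Lte / ((∫ ω, (Y2 (D ω) ω - Y2 0 ω) ∂μ) / (∫ ω, D ω ∂μ))
        < (∫ ω, D ω ∂μ) / dlow)
    (hsign₂ : (∫ ω, (Y2 (D ω) ω - Y2 0 ω) ∂μ) / (∫ ω, D ω ∂μ) = 0 → Lte ≤ 0) :
    0 ≤ (∫ ω, (Y2 (D ω) ω - Y2 0 ω) ∂μ) / (∫ ω, D ω ∂μ)
      ↔ 0 ≤ ((∫ ω, (Y2 (D ω) ω - Y1 ω) ∂μ) - L) / ∫ ω, (D ω - dlow) ∂μ :=
  sign_of_WAS_identification_general μ D Y1 Y2 dlow L Lte hdlow hDlb hED hEDd hY1 hY20 hY2D hTEint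
    hPT hUC hL hLte hsign₁ hsign₂
end

section
/- For real random variables ΔY(0), TE₂ and D₂ > 0 a.s. with finite second moments and Var(D₂) > 0, if E[ΔY(0) | D₂] = μ₀ is constant, then β_fe := E[(D₂ − E[D₂])·ΔY] / E[(D₂ − E[D₂])·D₂] = E[ w(D₂) · E(TE₂ | D₂) ], where ΔY = ΔY(0) + D₂·TE₂ and w(d) = (d − E[D₂])·d / E[(D₂ − E[D₂])·D₂]. -/
open MeasureTheory Filter Set ProbabilityTheory

/-!
Condition on `D`. Since the centred dose `D - E[D]` is `σ(D)`-measurable, the tower property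
replaces `ΔY` in the numerator by `E[ΔY | D] = μ₀ + D · E[TE | D]`. The constant `μ₀` is
uncorrelated with the centred dose, so only `(D - E[D]) · D · E[TE | D]` survives; dividing by
the denominator turns it into the weighted average.
-/

section ConditionalExpectation

variable {Ω : Type*} {m m0 : MeasurableSpace Ω} {μ : Measure Ω}

theorem integral_mul_condExp_of_stronglyMeasurable_left (hm : m ≤ m0)
    [SigmaFinite (μ.trim hm)] {f g : Ω → ℝ} (hf : StronglyMeasurable[m] f)
    (hfg : Integrable (fun ω => f ω * g ω) μ) (hg : Integrable g μ) :
    ∫ ω, f ω * μ[g | m] ω ∂μ = ∫ ω, f ω * g ω ∂μ := by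
  conv_rhs => rw [← integral_condExp hm]
  exact (integral_congr_ae (condExp_mul_of_stronglyMeasurable_left hf hfg hg)).symm

theorem condExp_add_mul_of_stronglyMeasurable_left {D X Y : Ω → ℝ}
    (hD : StronglyMeasurable[m] D) (hX : Integrable X μ) (hY : Integrable Y μ)
    (hDY : Integrable (fun ω => D ω * Y ω) μ) :
    μ[fun ω => X ω + D ω * Y ω | m] =ᵐ[μ] fun ω => μ[X | m] ω + D ω * μ[Y | m] ω := by
  filter_upwards [condExp_add hX hDY m, condExp_mul_of_stronglyMeasurable_left hD hDY hY]
    with ω hadd hmul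
  exact hadd.trans (congrArg (μ[X | m] ω + ·) hmul)

end ConditionalExpectation

theorem integral_sub_integral_mul_const {Ω : Type*} [MeasurableSpace Ω] {μ : Measure Ω}
    [IsProbabilityMeasure μ] {X : Ω → ℝ} (hX : Integrable X μ) (a : ℝ) :
    ∫ ω, (X ω - ∫ x, X x ∂μ) * a ∂μ = 0 := by
  rw [integral_mul_const, integral_sub hX (integrable_const _)]
  simp

theorem TWFE_decomposition_general {Ω : Type*} [m0 : MeasurableSpace Ω]
    (μ : Measure Ω) [IsProbabilityMeasure μ]
    (D ΔY0 TE : Ω → ℝ) (μ₀ : ℝ)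
    (hDmeas : Measurable D)
    (hD2 : MemLp D 2 μ)
    (hΔY0 : Integrable ΔY0 μ) (hTE : Integrable TE μ)
    (hDTE : Integrable (fun ω => D ω * TE ω) μ)
    (hprod : Integrable (fun ω => (D ω - ∫ x, D x ∂μ) * (ΔY0 ω + D ω * TE ω)) μ)
    (hwprod : Integrable (fun ω =>
      ((D ω - ∫ x, D x ∂μ) * D ω) * (μ[TE | MeasurableSpace.comap D inferInstance]) ω) μ)
    -- parallel trends across all treatment doses: E[ΔY(0) | D₂] = μ₀
    (hCE : μ[ΔY0 | MeasurableSpace.comap D inferInstance] =ᵐ[μ] fun _ => μ₀) :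
    (∫ ω, (D ω - ∫ x, D x ∂μ) * (ΔY0 ω + D ω * TE ω) ∂μ)
        / (∫ ω, (D ω - ∫ x, D x ∂μ) * D ω ∂μ)
      = ∫ ω, ((D ω - ∫ x, D x ∂μ) * D ω / (∫ x, (D x - ∫ y, D y ∂μ) * D x ∂μ))
          * (μ[TE | MeasurableSpace.comap D inferInstance]) ω ∂μ := by
  set c : ℝ := ∫ x, D x ∂μ
  have hDint : Integrable D μ := hD2.integrable one_le_two
  -- Stated before `m` enters the context, where it would hijack the `MeasurableSpace Ω` instance.
  have hconst : Integrable (fun ω => (D ω - c) * μ₀) μ :=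
    (hDint.sub (integrable_const c)).mul_const μ₀
  have hcentered : ∫ ω, (D ω - c) * μ₀ ∂μ = 0 := integral_sub_integral_mul_const hDint μ₀
  set m : MeasurableSpace Ω := MeasurableSpace.comap D inferInstance
  have hD : StronglyMeasurable[m] D := (comap_measurable D).stronglyMeasurable
  have hnum : ∫ ω, (D ω - c) * (ΔY0 ω + D ω * TE ω) ∂μ
      = ∫ ω, (D ω - c) * D ω * μ[TE | m] ω ∂μ := calc
    _ = ∫ ω, (D ω - c) * μ[fun ω => ΔY0 ω + D ω * TE ω | m] ω ∂μ :=
      (integral_mul_condExp_of_stronglyMeasurable_left hDmeas.comap_le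
        (hD.sub stronglyMeasurable_const) hprod (hΔY0.add hDTE)).symm
    _ = ∫ ω, ((D ω - c) * μ₀ + (D ω - c) * D ω * μ[TE | m] ω) ∂μ := by
      refine integral_congr_ae ?_
      filter_upwards [condExp_add_mul_of_stronglyMeasurable_left hD hΔY0 hTE hDTE, hCE]
        with ω hΔY hμ₀
      rw [hΔY, hμ₀]
      ring
    _ = _ := by
      rw [integral_add hconst hwprod, hcentered, zero_add]
  rw [hnum, ← integral_div]
  congr 1 with ω
  ring

/-- under parallel trends across all treatment doses, the probability
limit `β_fe` of the TWFE estimator is a weighted average of the conditional average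
slopes `E[TE₂ | D₂]`, with weights `w(D₂) = (D₂ − E[D₂])·D₂ / E[(D₂ − E[D₂])·D₂]`. -/
theorem TWFE_decomposition {Ω : Type*} [m0 : MeasurableSpace Ω]
    (μ : Measure Ω) [IsProbabilityMeasure μ]
    (D ΔY0 TE : Ω → ℝ) (μ₀ : ℝ)
    (hDmeas : Measurable D)
    (hDpos : ∀ᵐ ω ∂μ, 0 < D ω)
    (hD2 : MemLp D 2 μ)
    (hVar : 0 < ∫ ω, (D ω - ∫ x, D x ∂μ) * D ω ∂μ)
    (hΔY0 : Integrable ΔY0 μ) (hTE : Integrable TE μ)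
    (hDTE : Integrable (fun ω => D ω * TE ω) μ)
    (hprod : Integrable (fun ω => (D ω - ∫ x, D x ∂μ) * (ΔY0 ω + D ω * TE ω)) μ)
    (hwprod : Integrable (fun ω =>
      ((D ω - ∫ x, D x ∂μ) * D ω) * (μ[TE | MeasurableSpace.comap D inferInstance]) ω) μ)
    -- parallel trends across all treatment doses: E[ΔY(0) | D₂] = μ₀
    (hCE : μ[ΔY0 | MeasurableSpace.comap D inferInstance] =ᵐ[μ] fun _ => μ₀) :
    (∫ ω, (D ω - ∫ x, D x ∂μ) * (ΔY0 ω + D ω * TE ω) ∂μ)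
        / (∫ ω, (D ω - ∫ x, D x ∂μ) * D ω ∂μ)
      = ∫ ω, ((D ω - ∫ x, D x ∂μ) * D ω / (∫ x, (D x - ∫ y, D y ∂μ) * D x ∂μ))
          * (μ[TE | MeasurableSpace.comap D inferInstance]) ω ∂μ :=
  TWFE_decomposition_general (m0 := m0) μ D ΔY0 TE μ₀ hDmeas hD2 hΔY0 hTE hDTE hprod hwprod hCE
end

section
/- If E[ΔY(0) | D₂] = μ₀ (a constant) and E[TE₂ | D₂] = AS (a constant), then E[ΔY | D₂] = μ₀ + AS·D₂, i.e. the conditional expectation of ΔY given D₂ is an affine function of D₂ with slope AS, and moreover the population linear-regression slope β_fe = Cov(D₂, ΔY)/Var(D₂) equals AS. -/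
/-!
The dose `D` is `σ(D)`-measurable, so it pulls out of `E[· | D]`, which gives
`E[ΔY | D] = μ₀ + AS·D`. The covariance with a `σ(D)`-measurable variable only sees the conditional
expectation, hence `Cov(D, ΔY) = Cov(D, μ₀ + AS·D) = AS·Var(D)`.
-/

open MeasureTheory ProbabilityTheory

namespace ProbabilityTheory

variable {Ω : Type*} {m mΩ : MeasurableSpace Ω} {μ : Measure Ω} {X Y U V : Ω → ℝ}

lemma covariance_congr_right {Y' : Ω → ℝ} (h : Y =ᵐ[μ] Y') : cov[X, Y; μ] = cov[X, Y'; μ] := by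
  rw [covariance, covariance, integral_congr_ae h]
  exact integral_congr_ae (h.mono fun ω hω => by simp only [hω])

lemma integral_mul_condExp_of_stronglyMeasurable_left [IsFiniteMeasure μ] (hm : m ≤ mΩ)
    (hX : StronglyMeasurable[m] X) (hXY : Integrable (X * Y) μ) (hY : Integrable Y μ) :
    ∫ ω, X ω * μ[Y | m] ω ∂μ = ∫ ω, X ω * Y ω ∂μ :=
  (integral_congr_ae (condExp_mul_of_stronglyMeasurable_left hX hXY hY).symm).trans
    (integral_condExp hm)

lemma covariance_condExp_right [IsProbabilityMeasure μ] (hm : m ≤ mΩ)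
    (hXm : StronglyMeasurable[m] X) (hX : MemLp X 2 μ) (hY : MemLp Y 2 μ) :
    cov[X, μ[Y | m]; μ] = cov[X, Y; μ] := by
  have hcentered : μ[fun ω => Y ω - μ[Y] | m] =ᵐ[μ] fun ω => μ[Y | m] ω - μ[μ[Y | m]] := by
    filter_upwards [condExp_sub (hY.integrable one_le_two) (integrable_const (μ[Y])) m]
      with ω hω
    rw [condExp_const hm] at hω
    rwa [integral_condExp hm]
  calc cov[X, μ[Y | m]; μ]
      = ∫ ω, (X ω - μ[X]) * μ[fun ω => Y ω - μ[Y] | m] ω ∂μ :=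
        integral_congr_ae (hcentered.mono fun ω hω => by simp only [hω])
    _ = cov[X, Y; μ] :=
        integral_mul_condExp_of_stronglyMeasurable_left hm (hXm.sub stronglyMeasurable_const)
          ((hX.sub (memLp_const _)).integrable_mul (hY.sub (memLp_const _)))
          ((hY.integrable one_le_two).sub (integrable_const _))

lemma covariance_eq_mul_variance_of_condExp_eq_affine [IsProbabilityMeasure μ] (hm : m ≤ mΩ)
    (hXm : StronglyMeasurable[m] X) (hX : MemLp X 2 μ) (hY : MemLp Y 2 μ) {α β : ℝ}
    (hlin : μ[Y | m] =ᵐ[μ] fun ω => α + β * X ω) :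
    cov[X, Y; μ] = β * Var[X; μ] := by
  rw [← covariance_condExp_right hm hXm hX hY, covariance_congr_right hlin,
    covariance_const_add_right ((hX.integrable one_le_two).const_mul β),
    covariance_const_mul_right, covariance_self hX.aemeasurable]

lemma condExp_add_mul_eq_affine (hXm : StronglyMeasurable[m] X) (hU : Integrable U μ)
    (hV : Integrable V μ) (hXV : Integrable (X * V) μ) {a b : ℝ}
    (hUc : μ[U | m] =ᵐ[μ] fun _ => a) (hVc : μ[V | m] =ᵐ[μ] fun _ => b) :
    μ[U + X * V | m] =ᵐ[μ] fun ω => a + b * X ω := by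
  filter_upwards [condExp_add hU hXV m, condExp_mul_of_stronglyMeasurable_left hXm hXV hV,
    hUc, hVc] with ω hadd hmul hU hV
  rw [hadd, Pi.add_apply, hmul, Pi.mul_apply, hU, hV, mul_comm]

end ProbabilityTheory

theorem TWFE_linearity_and_consistency_general {Ω : Type*} [m0 : MeasurableSpace Ω]
    (μ : Measure Ω) [IsProbabilityMeasure μ]
    (D ΔY0 TE : Ω → ℝ) (μ₀ AS : ℝ)
    (hDmeas : Measurable D)
    (hD2 : MemLp D 2 μ)
    (hVar : 0 < ∫ ω, (D ω - ∫ x, D x ∂μ) ^ 2 ∂μ)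
    (hΔY0 : Integrable ΔY0 μ) (hTE : Integrable TE μ)
    (hDTE : Integrable (fun ω => D ω * TE ω) μ)
    (hΔY2 : MemLp (fun ω => ΔY0 ω + D ω * TE ω) 2 μ)
    -- parallel trends across all treatment doses: E[ΔY(0) | D₂] = μ₀
    (hCE0 : μ[ΔY0 | MeasurableSpace.comap D inferInstance] =ᵐ[μ] fun _ => μ₀)
    -- homogeneous and linear effect: E[TE₂ | D₂] = AS
    (hCET : μ[TE | MeasurableSpace.comap D inferInstance] =ᵐ[μ] fun _ => AS) :
    (μ[fun ω => ΔY0 ω + D ω * TE ω | MeasurableSpace.comap D inferInstance]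
        =ᵐ[μ] fun ω => μ₀ + AS * D ω) ∧
    (∫ ω, (D ω - ∫ x, D x ∂μ) *
        ((ΔY0 ω + D ω * TE ω) - ∫ x, (ΔY0 x + D x * TE x) ∂μ) ∂μ)
      / (∫ ω, (D ω - ∫ x, D x ∂μ) ^ 2 ∂μ) = AS := by
  have hm : MeasurableSpace.comap D inferInstance ≤ m0 := hDmeas.comap_le
  have hDm : StronglyMeasurable[MeasurableSpace.comap D inferInstance] D :=
    (comap_measurable D).stronglyMeasurable
  have hlin := condExp_add_mul_eq_affine hDm hΔY0 hTE hDTE hCE0 hCET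
  refine ⟨hlin, ?_⟩
  rw [← variance_eq_integral hDmeas.aemeasurable] at hVar ⊢
  change cov[D, fun ω => ΔY0 ω + D ω * TE ω; μ] / _ = AS
  rw [covariance_eq_mul_variance_of_condExp_eq_affine hm hDm hD2 hΔY2 hlin,
    mul_div_cancel_right₀ _ hVar.ne']

/-- Point 1 of Theorem 4 of the paper: if `E[ΔY(0) | D₂] = μ₀` and
`E[TE₂ | D₂] = AS` are constant, then `E[ΔY | D₂] = μ₀ + AS·D₂` and the population
linear-regression slope `β_fe = Cov(D₂, ΔY)/Var(D₂)` equals `AS`. -/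
theorem TWFE_linearity_and_consistency {Ω : Type*} [m0 : MeasurableSpace Ω]
    (μ : Measure Ω) [IsProbabilityMeasure μ]
    (D ΔY0 TE : Ω → ℝ) (μ₀ AS : ℝ)
    (hDmeas : Measurable D)
    (hDpos : ∀ᵐ ω ∂μ, 0 < D ω)
    (hD2 : MemLp D 2 μ)
    (hVar : 0 < ∫ ω, (D ω - ∫ x, D x ∂μ) ^ 2 ∂μ)
    (hΔY0 : Integrable ΔY0 μ) (hTE : Integrable TE μ)
    (hDTE : Integrable (fun ω => D ω * TE ω) μ)
    (hΔY2 : MemLp (fun ω => ΔY0 ω + D ω * TE ω) 2 μ)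
    -- parallel trends across all treatment doses: E[ΔY(0) | D₂] = μ₀
    (hCE0 : μ[ΔY0 | MeasurableSpace.comap D inferInstance] =ᵐ[μ] fun _ => μ₀)
    -- homogeneous and linear effect: E[TE₂ | D₂] = AS
    (hCET : μ[TE | MeasurableSpace.comap D inferInstance] =ᵐ[μ] fun _ => AS) :
    (μ[fun ω => ΔY0 ω + D ω * TE ω | MeasurableSpace.comap D inferInstance]
        =ᵐ[μ] fun ω => μ₀ + AS * D ω) ∧
    (∫ ω, (D ω - ∫ x, D x ∂μ) *
        ((ΔY0 ω + D ω * TE ω) - ∫ x, (ΔY0 x + D x * TE x) ∂μ) ∂μ)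
      / (∫ ω, (D ω - ∫ x, D x ∂μ) ^ 2 ∂μ) = AS :=
  TWFE_linearity_and_consistency_general (m0 := m0) μ D ΔY0 TE μ₀ AS hDmeas hD2 hVar hΔY0 hTE hDTE
    hΔY2 hCE0 hCET
end
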